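/- Let S be an Arf numerical semigroup minimally generated by n₁ < n₂ < … < n_m with multiplicity m > 5 and conductor s. If M = (a_ij) is any RF-matrix of the Frobenius number s−1, then there exist indices i ≠ i' and an index j in {1, …, m} such that a_ij = a_{i'j} = 0. -/

import Mathlib

/-!
Arf semigroups have maximal embedding dimension: `x + y - m ∈ S` for all `x, y ≥ m` in `S`.
Hence `F + m`, with `F = s - 1` the Frobenius number, is not a sum of two nonzero elements
of `S`, so it is a generator; it is the largest one, `n_L`, since a larger generator
`n_L = m + (n_L - m)` would be such a sum. In row `i ∉ {0, L}` of an RF-matrix,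
`F = a n_L - n_i + t` with `t ∈ S`: `a ≥ 2` would give `F ≥ n_L > F`, and `a = 1` would
decompose the generator as `n_i = m + t`. So column `L` vanishes off rows `0` and `L`.
-/
/-- `S ⊆ ℕ` is a numerical semigroup: contains `0`, closed under addition,
and has finite complement in `ℕ`. -/
def IsNumericalSemigroup (S : Set ℕ) : Prop :=
  0 ∈ S ∧ (∀ a ∈ S, ∀ b ∈ S, a + b ∈ S) ∧ (Sᶜ).Finite

/-- `S` satisfies the Arf condition: for `x ≤ y` in `S`, `2y - x ∈ S`. -/
def IsArf (S : Set ℕ) : Prop :=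
  ∀ x ∈ S, ∀ y ∈ S, x ≤ y → 2 * y - x ∈ S

/-- `m` is the multiplicity of `S`: the smallest nonzero element. -/
def HasMultiplicity (S : Set ℕ) (m : ℕ) : Prop :=
  m ∈ S ∧ m ≠ 0 ∧ ∀ n ∈ S, n ≠ 0 → m ≤ n

/-- `s` is the conductor of `S`: the least `t` with `[t, ∞) ⊆ S`. -/
def HasConductor (S : Set ℕ) (s : ℕ) : Prop :=
  (∀ n, s ≤ n → n ∈ S) ∧ ∀ t, (∀ n, t ≤ n → n ∈ S) → s ≤ t

/-- The set of pseudo-Frobenius numbers of `S`. -/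
def pseudoFrobeniusSet (S : Set ℕ) : Set ℕ :=
  {z | z ∉ S ∧ ∀ n ∈ S, n ≠ 0 → z + n ∈ S}

/-- `A` is a row-factorization (RF-) matrix of `f` with respect to generators `n`:
diagonal entries are `-1`, off-diagonal entries are nonnegative, and every row
gives a representation of `f` in terms of the generators. -/
def IsRFMatrix {e : ℕ} (n : Fin e → ℕ) (f : ℤ) (A : Matrix (Fin e) (Fin e) ℤ) : Prop :=
  (∀ i, A i i = -1) ∧ (∀ i j, i ≠ j → 0 ≤ A i j) ∧
    (∀ i, f = ∑ j, A i j * (n j : ℤ))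

section MinimalGenerators

variable {G : Set ℕ}

lemma mem_closure_diff_singleton_of_lt {g z : ℕ} (hz : z ∈ AddSubmonoid.closure G)
    (hlt : z < g) : z ∈ AddSubmonoid.closure (G \ {g}) := by
  induction hz using AddSubmonoid.closure_induction with
  | mem x hx => exact AddSubmonoid.subset_closure ⟨hx, hlt.ne⟩
  | zero => exact zero_mem _
  | add x y _ _ ihx ihy => exact add_mem (ihx (by omega)) (ihy (by omega))

lemma exists_eq_add_of_mem_closure {x : ℕ} (hx : x ∈ AddSubmonoid.closure G) (hx0 : x ≠ 0) :
    ∃ g ∈ G, g ≠ 0 ∧ ∃ r ∈ AddSubmonoid.closure G, x = g + r := by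
  induction hx using AddSubmonoid.closure_induction with
  | mem x hx => exact ⟨x, hx, hx0, 0, zero_mem _, rfl⟩
  | zero => exact absurd rfl hx0
  | add x y _ hy ihx ihy =>
    rcases eq_or_ne x 0 with rfl | hx0'
    · simpa using ihy (by simpa using hx0)
    · obtain ⟨g, hg, hg0, r, hr, rfl⟩ := ihx hx0'
      exact ⟨g, hg, hg0, r + y, add_mem hr hy, by ring⟩

lemma zero_notMem_of_minimal
    (hmin : ∀ T ⊆ G, (AddSubmonoid.closure G : Set ℕ) = AddSubmonoid.closure T → T = G) :
    0 ∉ G := by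
  intro h0
  have hT : AddSubmonoid.closure (G \ {0}) = AddSubmonoid.closure G := by
    rw [← AddSubmonoid.closure_insert_zero, Set.insert_sdiff_singleton,
      AddSubmonoid.closure_insert_zero]
  exact (hmin _ Set.sdiff_subset (congrArg _ hT.symm) ▸ h0).2 rfl

lemma ne_add_of_minimal
    (hmin : ∀ T ⊆ G, (AddSubmonoid.closure G : Set ℕ) = AddSubmonoid.closure T → T = G)
    {g x y : ℕ} (hg : g ∈ G) (hx : x ∈ AddSubmonoid.closure G)
    (hy : y ∈ AddSubmonoid.closure G) (hx0 : x ≠ 0) (hy0 : y ≠ 0) : g ≠ x + y := by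
  intro hgxy
  have hgT : g ∈ AddSubmonoid.closure (G \ {g}) := hgxy ▸
    add_mem (mem_closure_diff_singleton_of_lt hx (by omega))
      (mem_closure_diff_singleton_of_lt hy (by omega))
  have hT : AddSubmonoid.closure G = AddSubmonoid.closure (G \ {g}) := by
    refine le_antisymm (AddSubmonoid.closure_le.2 fun z hz => ?_)
      (AddSubmonoid.closure_mono Set.sdiff_subset)
    by_cases hzg : z = g
    · exact hzg ▸ hgT
    · exact AddSubmonoid.subset_closure ⟨hz, hzg⟩
  exact (hmin _ Set.sdiff_subset (congrArg _ hT) ▸ hg).2 rfl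

end MinimalGenerators

section Arf

lemma IsArf.shift {U : Set ℕ} (hU : IsArf U) (a : ℕ) : IsArf {t | a + t ∈ U} := by
  intro u hu v hv huv
  have h := hU _ hu _ hv (by omega)
  rwa [show 2 * (a + v) - (a + u) = a + (2 * v - u) by omega] at h

lemma IsArf.add_mem {U : Set ℕ} (hU : IsArf U) (h0 : 0 ∈ U) {a b : ℕ} (ha : a ∈ U)
    (hb : b ∈ U) : a + b ∈ U := by
  obtain ⟨N, hN⟩ : ∃ N, a + b = N := ⟨_, rfl⟩
  induction N using Nat.strong_induction_on generalizing U a b with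
  | _ N ih =>
    wlog hab : a ≤ b generalizing a b
    · rw [add_comm]; exact this hb ha (by omega) (by omega)
    rcases Nat.eq_zero_or_pos a with rfl | ha0
    · simpa using hb
    -- in the set shifted by `a`, the sum of `a` and `b - a` is `b < N`
    have h2a : a + a ∈ U := by simpa [two_mul] using hU 0 h0 a ha (Nat.zero_le a)
    have hba : a + (b - a) ∈ U := by rwa [Nat.add_sub_cancel' hab]
    have h := ih b (by omega) (hU.shift a) (by simpa using ha) h2a hba (by omega)
    rwa [Set.mem_ofPred_eq, show a + (a + (b - a)) = a + b by omega] at h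

lemma IsArf.add_sub_mem {S : Set ℕ} (hS : IsArf S) {m x y : ℕ} (hm : m ∈ S) (hx : x ∈ S)
    (hy : y ∈ S) (hmx : m ≤ x) (hmy : m ≤ y) : x + y - m ∈ S := by
  have h := (hS.shift m).add_mem (a := x - m) (b := y - m) (by simpa using hm)
    (show m + (x - m) ∈ S by rwa [Nat.add_sub_cancel' hmx])
    (show m + (y - m) ∈ S by rwa [Nat.add_sub_cancel' hmy])
  rwa [Set.mem_ofPred_eq, show m + (x - m + (y - m)) = x + y - m by omega] at h

end Arf

section Conductor

variable {G : Set ℕ} {m s : ℕ}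

lemma HasConductor.sub_one_notMem {S : Set ℕ} (hcon : HasConductor S s) (hs : 0 < s) :
    s - 1 ∉ S := by
  intro h
  have := hcon.2 (s - 1) fun k hk => by
    rcases hk.eq_or_lt with rfl | hlt
    exacts [h, hcon.1 k (by omega)]
  omega

lemma sub_one_add_mem_of_isArf (hArf : IsArf (AddSubmonoid.closure G))
    (hmul : HasMultiplicity (AddSubmonoid.closure G) m)
    (hcon : HasConductor (AddSubmonoid.closure G) s) (hs : 0 < s) : s - 1 + m ∈ G := by
  obtain ⟨hmS, hm0, hm_le⟩ := hmul
  obtain ⟨g, hg, hg0, r, hr, hgr⟩ :=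
    exists_eq_add_of_mem_closure (hcon.1 (s - 1 + m) (by omega)) (by omega)
  rcases eq_or_ne r 0 with rfl | hr0
  · simpa [hgr] using hg
  · -- a second summand would put the Frobenius number `g + r - m` into the semigroup
    have := hArf.add_sub_mem hmS (AddSubmonoid.subset_closure hg) hr
      (hm_le g (AddSubmonoid.subset_closure hg) hg0) (hm_le r hr hr0)
    exact absurd (by rwa [← hgr, Nat.add_sub_cancel] at this) (hcon.sub_one_notMem hs)

lemma le_sub_one_add_of_minimal
    (hmin : ∀ T ⊆ G, (AddSubmonoid.closure G : Set ℕ) = AddSubmonoid.closure T → T = G)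
    (hmul : HasMultiplicity (AddSubmonoid.closure G) m)
    (hcon : HasConductor (AddSubmonoid.closure G) s) {g : ℕ} (hg : g ∈ G) :
    g ≤ s - 1 + m := by
  by_contra! hlt
  exact ne_add_of_minimal hmin hg hmul.1 (hcon.1 (g - m) (by omega)) hmul.2.1 (by omega)
    (by omega)

end Conductor

namespace IsRFMatrix

variable {e : ℕ} {n : Fin e → ℕ} {f : ℤ} {A : Matrix (Fin e) (Fin e) ℤ}

lemma exists_eq_mul_sub_add (hA : IsRFMatrix n f A) {i j : Fin e} (hij : i ≠ j) :
    ∃ t ∈ AddSubmonoid.closure (Set.range n), f = A i j * n j - n i + t := by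
  obtain ⟨hdiag, hnonneg, hrow⟩ := hA
  set R := (Finset.univ.erase i).erase j
  have hj : j ∈ Finset.univ.erase i := Finset.mem_erase.2 ⟨hij.symm, Finset.mem_univ j⟩
  refine ⟨∑ k ∈ R, (A i k).toNat * n k,
    AddSubmonoid.sum_mem _ fun k _ => AddSubmonoid.nsmul_mem _
      (AddSubmonoid.subset_closure (Set.mem_range_self k)) _, ?_⟩
  have hR : ((∑ k ∈ R, (A i k).toNat * n k : ℕ) : ℤ) = ∑ k ∈ R, A i k * n k := by
    push_cast
    refine Finset.sum_congr rfl fun k hk => ?_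
    have hik : i ≠ k := (Finset.ne_of_mem_erase (Finset.mem_of_mem_erase hk)).symm
    rw [Int.toNat_of_nonneg (hnonneg i k hik)]
  rw [hrow i, hR, ← Finset.add_sum_erase _ _ (Finset.mem_univ i),
    ← Finset.add_sum_erase _ _ hj, hdiag i]
  ring

lemma apply_eq_zero (hA : IsRFMatrix n f A) {i j : Fin e} (hij : i ≠ j) (hlt : n i < n j)
    {c : ℕ} (hj : (n j : ℤ) = f + c)
    (hirr : ∀ t ∈ AddSubmonoid.closure (Set.range n), n i ≠ c + t) : A i j = 0 := by
  obtain ⟨t, ht, hf⟩ := hA.exists_eq_mul_sub_add hij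
  have hnonneg := hA.2.1 i j hij
  have hle : A i j < 2 := by
    by_contra! h2
    linarith [mul_le_mul_of_nonneg_right h2 (Int.natCast_nonneg (n j)), Int.natCast_nonneg t,
      (by exact_mod_cast hlt : (n i : ℤ) < n j)]
  have hne : A i j ≠ 1 := by
    intro h1
    exact hirr t ht (by rw [h1] at hf; omega)
  omega

end IsRFMatrix

theorem arf_big_mult_zero_column_general (S : Set ℕ) (m s : ℕ)
    (hArf : IsArf S)
    (hmul : HasMultiplicity S m) (hm : 5 < m)
    (hcon : HasConductor S s)
    (n : Fin m → ℕ) (hmono : StrictMono n)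
    (hgen : S = (AddSubmonoid.closure (Set.range n) : Set ℕ))
    (hmin : ∀ T : Set ℕ, T ⊆ Set.range n →
      S = (AddSubmonoid.closure T : Set ℕ) → T = Set.range n)
    (A : Matrix (Fin m) (Fin m) ℤ)
    (hA : IsRFMatrix n ((s : ℤ) - 1) A) :
    ∃ i i' j : Fin m, i ≠ i' ∧ A i j = 0 ∧ A i' j = 0 := by
  subst hgen
  have hs : 0 < s := by
    by_contra! hs0
    have := hmul.2.2 1 (hcon.1 1 (by omega)) one_ne_zero
    omega
  set L : Fin m := ⟨m - 1, by omega⟩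
  have hnL : n L = s - 1 + m := by
    obtain ⟨k, hk⟩ := sub_one_add_mem_of_isArf hArf hmul hcon hs
    exact (le_sub_one_add_of_minimal hmin hmul hcon ⟨L, rfl⟩).antisymm
      (hk ▸ hmono.monotone (Fin.le_def.2 (Nat.le_sub_one_of_lt k.isLt)))
  have hcol (i : Fin m) (hi0 : 0 < (i : ℕ)) (hiL : i < L) : A i L = 0 := by
    have hmi : m < n i := by
      have hn0 := hmul.2.2 _ (AddSubmonoid.subset_closure ⟨⟨0, by omega⟩, rfl⟩)
        fun h => zero_notMem_of_minimal hmin ⟨_, h⟩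
      exact hn0.trans_lt (hmono (Fin.lt_def.2 hi0))
    refine hA.apply_eq_zero hiL.ne (hmono hiL) (c := m) (by rw [hnL]; omega) fun t ht hit => ?_
    exact ne_add_of_minimal hmin ⟨i, rfl⟩ hmul.1 ht hmul.2.1 (by omega) hit
  refine ⟨⟨1, by omega⟩, ⟨2, by omega⟩, L, by simp [Fin.ext_iff], ?_, ?_⟩
  exacts [hcol _ one_pos (Fin.lt_def.2 (show 1 < m - 1 by omega)),
    hcol _ two_pos (Fin.lt_def.2 (show 2 < m - 1 by omega))]

/-- Let `S` be an Arf numerical semigroup minimally generated by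
`n 0 < n 1 < … < n (m-1)` with multiplicity `m > 5` and conductor `s` (Arf semigroups
have maximal embedding dimension, so the number of minimal generators is `m`). Then any
RF-matrix `A` of the Frobenius number `s - 1` has two zero entries in a common column:
there are `i ≠ i'` and `j` with `A i j = A i' j = 0`. -/
theorem arf_big_mult_zero_column (S : Set ℕ) (m s : ℕ)
    (hNS : IsNumericalSemigroup S) (hArf : IsArf S)
    (hmul : HasMultiplicity S m) (hm : 5 < m)
    (hcon : HasConductor S s)
    (n : Fin m → ℕ) (hmono : StrictMono n)
    (hgen : S = (AddSubmonoid.closure (Set.range n) : Set ℕ))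
    (hmin : ∀ T : Set ℕ, T ⊆ Set.range n →
      S = (AddSubmonoid.closure T : Set ℕ) → T = Set.range n)
    (A : Matrix (Fin m) (Fin m) ℤ)
    (hA : IsRFMatrix n ((s : ℤ) - 1) A) :
    ∃ i i' j : Fin m, i ≠ i' ∧ A i j = 0 ∧ A i' j = 0 :=
  arf_big_mult_zero_column_general S m s hArf hmul hm hcon n hmono hgen hmin A hA
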